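/- arXiv:2211.04322 — 6 statements merged into one kernel-verified Lean document; each statement's English description precedes it below -/
import Mathlib

section
/- Let 𝒮 be a split system on a finite set X with |X| ≥ 3, and let x, y, z ∈ X be distinct. Then the map ψ : 𝒮 → P(X) that assigns to each split S ∈ 𝒮 the part of S containing at least two elements of {x,y,z} is a vertex of the Buneman graph B(𝒮), and it is the unique median of the leaves φ_x, φ_y, φ_z in B(𝒮). -/
namespace InjectiveSplitSystems

open Finset

variable {α : Type*} [DecidableEq α]

/-- A split of `X`: an unordered bipartition of `X` into two nonempty disjoint parts,
represented as the two-element set `{A, B}` of its parts. -/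
def IsSplit (X : Finset α) (S : Finset (Finset α)) : Prop :=
  ∃ A B : Finset α, S = {A, B} ∧ A ∪ B = X ∧ A ∩ B = ∅ ∧ A ≠ ∅ ∧ B ≠ ∅

/-- `S` is an `r`-split of `X`: a split of `X` whose minimum part size is `r`. -/
def IsRSplit (X : Finset α) (r : ℕ) (S : Finset (Finset α)) : Prop :=
  IsSplit X S ∧ (∃ A ∈ S, A.card = r) ∧ ∀ A ∈ S, r ≤ A.card

/-- A split system on `X`: a set of splits of `X` containing all trivial splits
`{x} | X \ {x}`, `x ∈ X`. -/
def IsSplitSystem (X : Finset α) (𝒮 : Finset (Finset (Finset α))) : Prop :=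
  (∀ S ∈ 𝒮, IsSplit X S) ∧ ∀ x ∈ X, ({{x}, X \ {x}} : Finset (Finset α)) ∈ 𝒮

/-- `phiNe Y Y' S` says `φ_Y(S) ≠ φ_{Y'}(S)`: the part of `S` containing at least two
elements of the 3-set `Y` differs from the part of `S` containing at least two
elements of the 3-set `Y'`. -/
def phiNe (Y Y' : Finset α) (S : Finset (Finset α)) : Prop :=
  ∃ t ∈ S, ∃ t' ∈ S, t ≠ t' ∧ 2 ≤ (Y ∩ t).card ∧ 2 ≤ (Y' ∩ t').card

/-- A split system on `X` is injective if for all distinct 3-subsets `Y`, `Y'` of `X`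
there is a split `S ∈ 𝒮` with `φ_Y(S) ≠ φ_{Y'}(S)`. -/
def IsInjective (X : Finset α) (𝒮 : Finset (Finset (Finset α))) : Prop :=
  ∀ Y Y' : Finset α, Y ⊆ X → Y' ⊆ X → Y.card = 3 → Y'.card = 3 → Y ≠ Y' →
    ∃ S ∈ 𝒮, phiNe Y Y' S

/-- The restriction `S|_Y` of a split to `Y`, as the set of restricted parts. -/
def restrictSplit (S : Finset (Finset α)) (Y : Finset α) : Finset (Finset α) :=
  S.image (· ∩ Y)

open scoped Classical in
/-- The restriction `𝒮|_Y` of a split system to `Y`: all splits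
`(A ∩ Y) | (B ∩ Y)` with `A|B ∈ 𝒮` and both intersections nonempty. -/
noncomputable def restrictSS (𝒮 : Finset (Finset (Finset α))) (Y : Finset α) :
    Finset (Finset (Finset α)) :=
  (𝒮.image fun S => restrictSplit S Y).filter fun T => ∀ t ∈ T, t ≠ ∅

/-- `𝒮` 4-dices `X`. -/
def FourDices (X : Finset α) (𝒮 : Finset (Finset (Finset α))) : Prop :=
  X.card < 4 ∨ ∀ Y ⊆ X, Y.card = 4 →
    ∃ 𝒯 ⊆ restrictSS 𝒮 Y, 2 ≤ 𝒯.card ∧ ∀ S ∈ 𝒯, IsRSplit Y 2 S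

/-- `𝒮` 5-dices `X`. -/
def FiveDices (X : Finset α) (𝒮 : Finset (Finset (Finset α))) : Prop :=
  X.card < 5 ∨ ∀ Y ⊆ X, Y.card = 5 →
    ∃ 𝒯 ⊆ restrictSS 𝒮 Y, 5 ≤ 𝒯.card ∧ ∀ S ∈ 𝒯, IsRSplit Y 2 S

/-- `𝒮` 6-dices `X`: every 6-subset restriction contains a 3-split or a triangle
of 2-splits. -/
def SixDices (X : Finset α) (𝒮 : Finset (Finset (Finset α))) : Prop :=
  X.card < 6 ∨ ∀ Y ⊆ X, Y.card = 6 →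
    (∃ S ∈ restrictSS 𝒮 Y, IsRSplit Y 3 S) ∨
    (∃ x ∈ Y, ∃ y ∈ Y, ∃ z ∈ Y, x ≠ y ∧ x ≠ z ∧ y ≠ z ∧
      ({{x, y}, Y \ {x, y}} : Finset (Finset α)) ∈ restrictSS 𝒮 Y ∧
      ({{x, z}, Y \ {x, z}} : Finset (Finset α)) ∈ restrictSS 𝒮 Y ∧
      ({{y, z}, Y \ {y, z}} : Finset (Finset α)) ∈ restrictSS 𝒮 Y)

/-- Two splits are incompatible if they are distinct and all four pairwise
intersections of their parts are nonempty. -/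
def Incompatible (S T : Finset (Finset α)) : Prop :=
  S ≠ T ∧ ∀ A ∈ S, ∀ B ∈ T, A ∩ B ≠ ∅

open scoped Classical in
/-- The dimension of a split system: maximum size of a pairwise incompatible subset
(which is `1` when all splits are pairwise compatible and `𝒮` is nonempty). -/
noncomputable def dimSS (𝒮 : Finset (Finset (Finset α))) : ℕ :=
  (𝒮.powerset.filter fun 𝒯 => ∀ S ∈ 𝒯, ∀ T ∈ 𝒯, S ≠ T → Incompatible S T).sup Finset.card

/-- The injective dimension `ID(n)`: minimum dimension of an injective split system
on `{1, …, n}`. -/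
noncomputable def ID (n : ℕ) : ℕ :=
  sInf {d : ℕ | ∃ 𝒮 : Finset (Finset (Finset ℕ)),
    IsSplitSystem (Finset.Icc 1 n) 𝒮 ∧ IsInjective (Finset.Icc 1 n) 𝒮 ∧ dimSS 𝒮 = d}

/-- The injective 2-split dimension `ID₂(n)`: minimum dimension of an injective split
system on `{1, …, n}` all of whose non-trivial splits have size 2. -/
noncomputable def ID2 (n : ℕ) : ℕ :=
  sInf {d : ℕ | ∃ 𝒮 : Finset (Finset (Finset ℕ)),
    IsSplitSystem (Finset.Icc 1 n) 𝒮 ∧ IsInjective (Finset.Icc 1 n) 𝒮 ∧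
    (∀ S ∈ 𝒮, IsRSplit (Finset.Icc 1 n) 1 S ∨ IsRSplit (Finset.Icc 1 n) 2 S) ∧
    dimSS 𝒮 = d}

/-- `𝒮` is rooted-injective relative to `r`. -/
def IsRootedInjective (X : Finset α) (r : α) (𝒮 : Finset (Finset (Finset α))) : Prop :=
  ∀ Z Z' : Finset α, Z ⊆ X \ {r} → Z' ⊆ X \ {r} → Z.card = 2 → Z'.card = 2 → Z ≠ Z' →
    ∃ S ∈ 𝒮, phiNe (insert r Z) (insert r Z') S

/-- The rooted-injective dimension `ID^r(n)`: minimum dimension of a split system on an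
`n`-element set that is rooted-injective relative to a given element. -/
noncomputable def IDr (n : ℕ) : ℕ :=
  sInf {d : ℕ | ∃ 𝒮 : Finset (Finset (Finset ℕ)),
    IsSplitSystem (Finset.Icc 1 n) 𝒮 ∧ IsRootedInjective (Finset.Icc 1 n) 1 𝒮 ∧
    dimSS 𝒮 = d}

/-- `𝒮` is circular: there is a labelling `x_1, …, x_n` of `X` such that every split
of `𝒮` has the form `{x_i, …, x_j} | complement`. -/
def IsCircular (X : Finset α) (𝒮 : Finset (Finset (Finset α))) : Prop :=
  ∃ f : ℕ → α, Set.InjOn f ↑(Finset.Icc 1 X.card) ∧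
    (Finset.Icc 1 X.card).image f = X ∧
    ∀ S ∈ 𝒮, ∃ i j : ℕ, 1 ≤ i ∧ i ≤ j ∧ j ≤ X.card ∧
      S = {(Finset.Icc i j).image f, X \ (Finset.Icc i j).image f}

/-- `𝒮` is maximal circular: circular and not properly contained in any circular
split system on `X`. -/
def IsMaximalCircular (X : Finset α) (𝒮 : Finset (Finset (Finset α))) : Prop :=
  IsCircular X 𝒮 ∧ ∀ 𝒮' : Finset (Finset (Finset α)),
    IsSplitSystem X 𝒮' → IsCircular X 𝒮' → 𝒮 ⊆ 𝒮' → 𝒮' = 𝒮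

/-- The degree of `x` in the graph `P(𝒮)` on vertex set `X` whose edges are the
pairs `{x, y}` with `xy | X − {x,y} ∈ 𝒮`. -/
def degP (X : Finset α) (𝒮 : Finset (Finset (Finset α))) (x : α) : ℕ :=
  ((X \ {x}).filter fun y => ({{x, y}, X \ {x, y}} : Finset (Finset α)) ∈ 𝒮).card

/-- `P(𝒮)` contains a 3-clique. -/
def HasTriangle (X : Finset α) (𝒮 : Finset (Finset (Finset α))) : Prop :=
  ∃ x ∈ X, ∃ y ∈ X, ∃ z ∈ X, x ≠ y ∧ x ≠ z ∧ y ≠ z ∧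
    ({{x, y}, X \ {x, y}} : Finset (Finset α)) ∈ 𝒮 ∧
    ({{x, z}, X \ {x, z}} : Finset (Finset α)) ∈ 𝒮 ∧
    ({{y, z}, X \ {y, z}} : Finset (Finset α)) ∈ 𝒮

/-- Conditions (B1) and (B2) for a map to be a vertex of the Buneman graph. -/
def IsBunemanVertex (𝒮 : Finset (Finset (Finset α))) (φ : {S // S ∈ 𝒮} → Finset α) : Prop :=
  (∀ S, φ S ∈ S.1) ∧ ∀ S S', S ≠ S' → (φ S ∩ φ S').Nonempty

/-- The vertex set of the Buneman graph `B(𝒮)`. -/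
abbrev BunemanVertex (𝒮 : Finset (Finset (Finset α))) : Type _ :=
  {φ : {S // S ∈ 𝒮} → Finset α // IsBunemanVertex 𝒮 φ}

/-- The Buneman graph `B(𝒮)`: two vertices are adjacent iff they differ on exactly
one split. -/
def BunemanGraph (𝒮 : Finset (Finset (Finset α))) : SimpleGraph (BunemanVertex 𝒮) where
  Adj φ ψ := ∃! S, φ.1 S ≠ ψ.1 S
  symm := by
    constructor
    rintro φ ψ ⟨S, hS, hU⟩
    exact ⟨S, hS.symm, fun T hT => hU T hT.symm⟩
  loopless := by
    constructor
    rintro φ ⟨S, hS, -⟩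
    exact hS rfl

/-- `m` is a median of `u`, `v`, `w` in the graph `G`. -/
def IsMedian {V : Type*} (G : SimpleGraph V) (u v w m : V) : Prop :=
  G.dist u m + G.dist m v = G.dist u v ∧
  G.dist v m + G.dist m w = G.dist v w ∧
  G.dist u m + G.dist m w = G.dist u w

/-!
Distances in the Buneman graph are Hamming distances: from `u` one reaches `v` in
`hammingDist u v` steps by repeatedly flipping `u` to `v` on the split where the part of `v`
is largest. Hence `m` lies on a geodesic from `u` to `v` iff it agrees with `u` or `v` on every
split, so the medians of `φ_x, φ_y, φ_z` are the vertices choosing on every split a part with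
two of `x, y, z`. Such a part exists in every split and is unique, since two of them meet.
-/

theorem hammingDist_add_hammingDist_eq_iff {ι β : Type*} [Fintype ι] [DecidableEq β]
    (u m v : ι → β) :
    hammingDist u m + hammingDist m v = hammingDist u v ↔ ∀ i, m i = u i ∨ m i = v i := by
  simp only [hammingDist, card_filter, ← sum_add_distrib]
  rw [eq_comm, sum_eq_sum_iff_of_le fun i _ => by split_ifs <;> simp_all]
  refine forall_congr' fun i => ?_
  split_ifs <;> simp_all [eq_comm]

theorem two_le_card_inter_triple_iff {x y z : α} (hxy : x ≠ y) (hxz : x ≠ z) (hyz : y ≠ z)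
    {P : Finset α} :
    2 ≤ #({x, y, z} ∩ P) ↔ x ∈ P ∧ y ∈ P ∨ x ∈ P ∧ z ∈ P ∨ y ∈ P ∧ z ∈ P := by
  by_cases hx : x ∈ P <;> by_cases hy : y ∈ P <;> by_cases hz : z ∈ P <;>
    simp [insert_inter_of_mem, insert_inter_of_notMem, *]

theorem inter_nonempty_of_two_le_card_inter {Y A B : Finset α} (hY : #Y = 3)
    (hA : 2 ≤ #(Y ∩ A)) (hB : 2 ≤ #(Y ∩ B)) : (A ∩ B).Nonempty :=
  (inter_nonempty_of_card_lt_card_add_card (s := Y) inter_subset_left inter_subset_left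
    (by omega)).mono (inter_subset_inter inter_subset_right inter_subset_right)

namespace IsSplit

variable {X P Q : Finset α} {S : Finset (Finset α)}

theorem eq_pair_sdiff (hS : IsSplit X S) (hP : P ∈ S) : S = {P, X \ P} := by
  obtain ⟨A, B, rfl, hAB, hAB', -⟩ := hS
  have hdisj : Disjoint A B := disjoint_iff_inter_eq_empty.2 hAB'
  rcases mem_insert.1 hP with rfl | hP
  · rw [← hAB, union_sdiff_cancel_left hdisj]
  · rw [mem_singleton.1 hP, ← hAB, union_sdiff_cancel_right hdisj, pair_comm]

theorem subset (hS : IsSplit X S) (hP : P ∈ S) : P ⊆ X := by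
  obtain ⟨A, B, rfl, rfl, -⟩ := hS
  rcases mem_insert.1 hP with rfl | hP
  · exact subset_union_left
  · exact mem_singleton.1 hP ▸ subset_union_right

theorem eq_sdiff_of_ne (hS : IsSplit X S) (hP : P ∈ S) (hQ : Q ∈ S) (hPQ : P ≠ Q) :
    Q = X \ P := by
  rw [hS.eq_pair_sdiff hP, mem_insert, mem_singleton] at hQ
  exact hQ.resolve_left hPQ.symm

theorem disjoint_of_ne (hS : IsSplit X S) (hP : P ∈ S) (hQ : Q ∈ S) (hPQ : P ≠ Q) :
    Disjoint P Q :=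
  hS.eq_sdiff_of_ne hP hQ hPQ ▸ disjoint_sdiff

theorem eq_of_mem_of_mem (hS : IsSplit X S) (hP : P ∈ S) (hQ : Q ∈ S) {a : α}
    (haP : a ∈ P) (haQ : a ∈ Q) : P = Q := by
  by_contra hPQ
  exact disjoint_left.1 (hS.disjoint_of_ne hP hQ hPQ) haP haQ

theorem eq_of_common_part {T : Finset (Finset α)} (hS : IsSplit X S) (hT : IsSplit X T)
    (hPS : P ∈ S) (hPT : P ∈ T) : S = T := by
  rw [hS.eq_pair_sdiff hPS, hT.eq_pair_sdiff hPT]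

theorem exists_two_le_card_inter (hS : IsSplit X S) {Y : Finset α} (hYX : Y ⊆ X)
    (hY : #Y = 3) : ∃ P ∈ S, 2 ≤ #(Y ∩ P) := by
  obtain ⟨A, B, rfl, hAB, -⟩ := hS
  have hcard : #Y ≤ #(Y ∩ A) + #(Y ∩ B) :=
    calc #Y = #(Y ∩ A ∪ Y ∩ B) := by rw [← inter_union_distrib_left, hAB, inter_eq_left.2 hYX]
      _ ≤ _ := card_union_le _ _
  by_cases hA : 2 ≤ #(Y ∩ A)
  · exact ⟨A, mem_insert_self _ _, hA⟩
  · exact ⟨B, mem_insert_of_mem (mem_singleton_self _), by omega⟩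

theorem eq_of_two_le_card_inter (hS : IsSplit X S) (hP : P ∈ S) (hQ : Q ∈ S)
    {Y : Finset α} (hY : #Y = 3) (hPY : 2 ≤ #(Y ∩ P)) (hQY : 2 ≤ #(Y ∩ Q)) : P = Q := by
  by_contra hPQ
  obtain ⟨a, ha⟩ := inter_nonempty_of_two_le_card_inter hY hPY hQY
  exact hPQ (hS.eq_of_mem_of_mem hP hQ (mem_inter.1 ha).1 (mem_inter.1 ha).2)

end IsSplit

section BunemanGraph

variable {X : Finset α} {𝒮 : Finset (Finset (Finset α))}

theorem exists_bunemanVertex_two_le_card_inter (h𝒮 : ∀ S ∈ 𝒮, IsSplit X S) {Y : Finset α}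
    (hYX : Y ⊆ X) (hY : #Y = 3) : ∃ m : BunemanVertex 𝒮, ∀ S, 2 ≤ #(Y ∩ m.1 S) := by
  choose m hmS hmY using fun S : {S // S ∈ 𝒮} => (h𝒮 S.1 S.2).exists_two_le_card_inter hYX hY
  exact ⟨⟨m, hmS, fun S S' _ => inter_nonempty_of_two_le_card_inter hY (hmY S) (hmY S')⟩, hmY⟩

theorem BunemanVertex.apply_eq_of_mem (h𝒮 : ∀ S ∈ 𝒮, IsSplit X S) {u v : BunemanVertex 𝒮}
    {S : {S // S ∈ 𝒮}} {a : α} (hu : a ∈ u.1 S) (hv : a ∈ v.1 S) : u.1 S = v.1 S :=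
  (h𝒮 S.1 S.2).eq_of_mem_of_mem (u.2.1 S) (v.2.1 S) hu hv

theorem hammingDist_le_one_of_adj {u v : BunemanVertex 𝒮} (h : (BunemanGraph 𝒮).Adj u v) :
    hammingDist u.1 v.1 ≤ 1 := by
  obtain ⟨S₀, -, hS₀⟩ := h
  refine card_le_one.2 fun S hS T hT => ?_
  rw [mem_filter] at hS hT
  exact (hS₀ S hS.2).trans (hS₀ T hT.2).symm

theorem hammingDist_le_length {u v : BunemanVertex 𝒮} (p : (BunemanGraph 𝒮).Walk u v) :
    hammingDist u.1 v.1 ≤ p.length := by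
  induction p with
  | nil => simp
  | cons h p ih =>
    rw [SimpleGraph.Walk.length_cons]
    have := hammingDist_triangle _ _ _ |>.trans (add_le_add (hammingDist_le_one_of_adj h) ih)
    omega

/-- If `v T` missed `u T'`, it would be a proper subset of `v T' = X \ u T'`, contradicting the
maximality of `#(v T)`. -/
theorem isBunemanVertex_update (h𝒮 : ∀ S ∈ 𝒮, IsSplit X S) {u v : BunemanVertex 𝒮}
    {T : {S // S ∈ 𝒮}} (hmax : ∀ T', u.1 T' ≠ v.1 T' → #(v.1 T') ≤ #(v.1 T)) :
    IsBunemanVertex 𝒮 (Function.update u.1 T (v.1 T)) := by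
  have key : ∀ T', T' ≠ T → (v.1 T ∩ u.1 T').Nonempty := by
    intro T' hT'
    by_cases huv : u.1 T' = v.1 T'
    · exact huv ▸ v.2.2 T T' (Ne.symm hT')
    by_contra hdisj
    rw [not_nonempty_iff_eq_empty, ← disjoint_iff_inter_eq_empty] at hdisj
    have hvT' := (h𝒮 _ T'.2).eq_sdiff_of_ne (u.2.1 T') (v.2.1 T') huv
    have hsub : v.1 T ⊆ v.1 T' :=
      hvT' ▸ subset_sdiff.2 ⟨(h𝒮 _ T.2).subset (v.2.1 T), hdisj⟩
    have hne : v.1 T ≠ v.1 T' := fun h => hT' <| Subtype.ext <|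
      ((h𝒮 _ T.2).eq_of_common_part (h𝒮 _ T'.2) (v.2.1 T) (h ▸ v.2.1 T')).symm
    have := card_lt_card (Finset.ssubset_iff_subset_ne.2 ⟨hsub, hne⟩)
    have := hmax T' huv
    omega
  refine ⟨fun S => ?_, fun S S' hSS' => ?_⟩
  · rcases eq_or_ne S T with rfl | hS
    · simpa using v.2.1 S
    · simpa [hS] using u.2.1 S
  · rcases eq_or_ne S T with rfl | hS
    · simpa [Ne.symm hSS'] using key S' (Ne.symm hSS')
    rcases eq_or_ne S' T with rfl | hS'
    · simpa [hS, inter_comm] using key S hS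
    simpa [hS, hS'] using u.2.2 S S' hSS'

theorem exists_adj_hammingDist_lt (h𝒮 : ∀ S ∈ 𝒮, IsSplit X S) {u v : BunemanVertex 𝒮}
    (huv : u ≠ v) :
    ∃ w, (BunemanGraph 𝒮).Adj u w ∧ hammingDist w.1 v.1 < hammingDist u.1 v.1 := by
  have hne : (univ.filter fun S => u.1 S ≠ v.1 S).Nonempty := by
    simpa [hammingDist] using hammingDist_pos.2 (Subtype.coe_injective.ne huv)
  obtain ⟨T, hT, hmax⟩ := exists_max_image _ (fun S => #(v.1 S)) hne
  rw [mem_filter] at hT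
  refine ⟨⟨_, isBunemanVertex_update h𝒮 fun T' h => hmax T' (by simpa using h)⟩,
    ⟨T, by simpa using hT.2, fun S hS => ?_⟩, card_lt_card ?_⟩
  · by_contra h
    simp [h] at hS
  · refine (ssubset_iff_of_subset fun S hS => ?_).2 ⟨T, by simpa using hT.2, by simp⟩
    rcases eq_or_ne S T with rfl | h
    · simp at hS
    · simpa [h] using hS

theorem exists_walk_length_le_hammingDist (h𝒮 : ∀ S ∈ 𝒮, IsSplit X S)
    (u v : BunemanVertex 𝒮) :
    ∃ p : (BunemanGraph 𝒮).Walk u v, p.length ≤ hammingDist u.1 v.1 := by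
  induction h : hammingDist u.1 v.1 using Nat.strong_induction_on generalizing u with
  | _ n ih =>
    rcases eq_or_ne u v with rfl | huv
    · exact ⟨.nil, by simp⟩
    obtain ⟨w, hadj, hw⟩ := exists_adj_hammingDist_lt h𝒮 huv
    obtain ⟨p, hp⟩ := ih _ (h ▸ hw) w rfl
    exact ⟨.cons hadj p, by rw [SimpleGraph.Walk.length_cons]; omega⟩

theorem dist_bunemanGraph (h𝒮 : ∀ S ∈ 𝒮, IsSplit X S) (u v : BunemanVertex 𝒮) :
    (BunemanGraph 𝒮).dist u v = hammingDist u.1 v.1 := by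
  obtain ⟨p, hp⟩ := exists_walk_length_le_hammingDist h𝒮 u v
  obtain ⟨q, hq⟩ := SimpleGraph.Reachable.exists_walk_length_eq_dist ⟨p⟩
  exact le_antisymm ((SimpleGraph.dist_le p).trans hp) (hq ▸ hammingDist_le_length q)

theorem isMedian_bunemanGraph_iff (h𝒮 : ∀ S ∈ 𝒮, IsSplit X S) {u v w m : BunemanVertex 𝒮} :
    IsMedian (BunemanGraph 𝒮) u v w m ↔ ∀ S, (m.1 S = u.1 S ∨ m.1 S = v.1 S) ∧
      (m.1 S = v.1 S ∨ m.1 S = w.1 S) ∧ (m.1 S = u.1 S ∨ m.1 S = w.1 S) := by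
  simp only [IsMedian, dist_bunemanGraph h𝒮, hammingDist_add_hammingDist_eq_iff, forall_and]

end BunemanGraph

theorem statement0_general (X : Finset α)
    (𝒮 : Finset (Finset (Finset α))) (h𝒮 : IsSplitSystem X 𝒮)
    (x y z : α) (hx : x ∈ X) (hy : y ∈ X) (hz : z ∈ X)
    (hxy : x ≠ y) (hxz : x ≠ z) (hyz : y ≠ z)
    (φx φy φz : BunemanVertex 𝒮)
    (hφx : ∀ S : {S // S ∈ 𝒮}, x ∈ φx.1 S)
    (hφy : ∀ S : {S // S ∈ 𝒮}, y ∈ φy.1 S)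
    (hφz : ∀ S : {S // S ∈ 𝒮}, z ∈ φz.1 S) :
    (∃ m : BunemanVertex 𝒮,
        ∀ S : {S // S ∈ 𝒮}, 2 ≤ (({x, y, z} : Finset α) ∩ m.1 S).card) ∧
    ∀ m : BunemanVertex 𝒮,
      (∀ S : {S // S ∈ 𝒮}, 2 ≤ (({x, y, z} : Finset α) ∩ m.1 S).card) →
        IsMedian (BunemanGraph 𝒮) φx φy φz m ∧
        ∀ m' : BunemanVertex 𝒮, IsMedian (BunemanGraph 𝒮) φx φy φz m' → m' = m := by
  have hY : #({x, y, z} : Finset α) = 3 := card_eq_three.2 ⟨x, y, z, hxy, hxz, hyz, rfl⟩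
  have hYX : {x, y, z} ⊆ X := by simp [insert_subset_iff, *]
  refine ⟨exists_bunemanVertex_two_le_card_inter h𝒮.1 hYX hY, fun m hm => ⟨?_, fun m' hm' => ?_⟩⟩
  · refine (isMedian_bunemanGraph_iff h𝒮.1).2 fun S => ?_
    have hmx := fun h => BunemanVertex.apply_eq_of_mem h𝒮.1 (u := m) (v := φx) h (hφx S)
    have hmy := fun h => BunemanVertex.apply_eq_of_mem h𝒮.1 (u := m) (v := φy) h (hφy S)
    have hmz := fun h => BunemanVertex.apply_eq_of_mem h𝒮.1 (u := m) (v := φz) h (hφz S)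
    have := (two_le_card_inter_triple_iff hxy hxz hyz).1 (hm S)
    tauto
  · refine Subtype.ext <| funext fun S => (h𝒮.1 S.1 S.2).eq_of_two_le_card_inter
      (m'.2.1 S) (m.2.1 S) hY ((two_le_card_inter_triple_iff hxy hxz hyz).2 ?_) (hm S)
    have hm'x : m'.1 S = φx.1 S → x ∈ m'.1 S := fun h => h ▸ hφx S
    have hm'y : m'.1 S = φy.1 S → y ∈ m'.1 S := fun h => h ▸ hφy S
    have hm'z : m'.1 S = φz.1 S → z ∈ m'.1 S := fun h => h ▸ hφz S
    have := (isMedian_bunemanGraph_iff h𝒮.1).1 hm' S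
    tauto

/-- For a split system `𝒮` on `X` (`|X| ≥ 3`) and distinct `x,y,z ∈ X`,
the map `ψ` assigning to each split `S ∈ 𝒮` the part of `S` containing at least two
elements of `{x,y,z}` is a vertex of the Buneman graph `B(𝒮)`, and it is the unique
median in `B(𝒮)` of the leaves `φ_x`, `φ_y`, `φ_z`. -/
theorem statement0 (X : Finset α) (hX : 3 ≤ X.card)
    (𝒮 : Finset (Finset (Finset α))) (h𝒮 : IsSplitSystem X 𝒮)
    (x y z : α) (hx : x ∈ X) (hy : y ∈ X) (hz : z ∈ X)
    (hxy : x ≠ y) (hxz : x ≠ z) (hyz : y ≠ z)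
    (φx φy φz : BunemanVertex 𝒮)
    (hφx : ∀ S : {S // S ∈ 𝒮}, x ∈ φx.1 S)
    (hφy : ∀ S : {S // S ∈ 𝒮}, y ∈ φy.1 S)
    (hφz : ∀ S : {S // S ∈ 𝒮}, z ∈ φz.1 S) :
    (∃ m : BunemanVertex 𝒮,
        ∀ S : {S // S ∈ 𝒮}, 2 ≤ (({x, y, z} : Finset α) ∩ m.1 S).card) ∧
    ∀ m : BunemanVertex 𝒮,
      (∀ S : {S // S ∈ 𝒮}, 2 ≤ (({x, y, z} : Finset α) ∩ m.1 S).card) →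
        IsMedian (BunemanGraph 𝒮) φx φy φz m ∧
        ∀ m' : BunemanVertex 𝒮, IsMedian (BunemanGraph 𝒮) φx φy φz m' → m' = m :=
  statement0_general X 𝒮 h𝒮 x y z hx hy hz hxy hxz hyz φx φy φz hφx hφy hφz

end InjectiveSplitSystems
end

section
/- Let 𝒮 be a split system on a finite set X with |X| ≥ 4. If 𝒮 contains all 2-splits of X, then 𝒮 is injective. -/
namespace InjectiveSplitSystems

open Finset

variable {α : Type*} [DecidableEq α]

theorem phiNe_pair_compl {X A Y Y' : Finset α} (hY : 2 ≤ (Y ∩ A).card)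
    (hY' : 2 ≤ (Y' ∩ (X \ A)).card) : phiNe Y Y' {A, X \ A} := by
  obtain ⟨a, ha⟩ : (Y ∩ A).Nonempty := card_pos.mp (by omega)
  have hA_ne : A ≠ X \ A := fun h => (mem_sdiff.mp (h ▸ (mem_inter.mp ha).2)).2 (mem_inter.mp ha).2
  exact ⟨A, by simp, X \ A, by simp, hA_ne, hY, hY'⟩

theorem card_inter_sdiff_add_card_inter {X Y : Finset α} (hY : Y ⊆ X) (A : Finset α) :
    (Y ∩ (X \ A)).card + (Y ∩ A).card = Y.card := by
  rw [← inter_sdiff_assoc, inter_eq_left.mpr hY, card_sdiff_add_card_inter]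

theorem card_inter_le_one_of_notMem {A Y : Finset α} {y : α} (hA : A.card = 2) (hyA : y ∈ A)
    (hyY : y ∉ Y) : (Y ∩ A).card ≤ 1 := by
  have hsub : Y ∩ A ⊆ A.erase y := fun a ha =>
    mem_erase.mpr ⟨fun h => hyY (h ▸ (mem_inter.mp ha).1), (mem_inter.mp ha).2⟩
  simpa [card_erase_of_mem hyA, hA] using card_le_card hsub

theorem statement1_general (X : Finset α) (𝒮 : Finset (Finset (Finset α)))
    (h2 : ∀ A : Finset α, A ⊆ X → A.card = 2 → ({A, X \ A} : Finset (Finset α)) ∈ 𝒮) :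
    IsInjective X 𝒮 := by
  intro Y Y' hY hY' hYc hY'c hne
  obtain ⟨y, hyY, hyY'⟩ : ∃ y ∈ Y, y ∉ Y' :=
    not_subset.mp fun h => hne (eq_of_subset_of_card_le h (by omega))
  obtain ⟨A, hyA, hAY, hAc⟩ :=
    exists_subsuperset_card_eq (singleton_subset_iff.mpr hyY) (by simp) (by omega : 2 ≤ Y.card)
  refine ⟨_, h2 A (hAY.trans hY) hAc, phiNe_pair_compl ?_ ?_⟩
  · rw [inter_eq_right.mpr hAY, hAc]
  · have := card_inter_sdiff_add_card_inter hY' A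
    have := card_inter_le_one_of_notMem hAc (singleton_subset_iff.mp hyA) hyY'
    omega

/-- A split system on `X` (`|X| ≥ 4`) containing all 2-splits of `X`
is injective. -/
theorem statement1 (X : Finset α) (hX : 4 ≤ X.card)
    (𝒮 : Finset (Finset (Finset α))) (h𝒮 : IsSplitSystem X 𝒮)
    (h2 : ∀ A : Finset α, A ⊆ X → A.card = 2 → ({A, X \ A} : Finset (Finset α)) ∈ 𝒮) :
    IsInjective X 𝒮 :=
  statement1_general X 𝒮 h2

end InjectiveSplitSystems
end

section
/- Let 𝒮 be a split system on a finite set X with |X| ≥ 4. If 𝒮 is maximal circular, then 𝒮 is injective. -/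
/-!
Fix a labelling `x₁, …, xₙ` of `X` witnessing circularity. Adding the split
`{xᵢ, …, xⱼ} | rest` (`1 ≤ i ≤ j < n`) keeps the system circular, so by maximality all
these splits lie in `𝒮`. Distinct 3-sets `Y`, `Y'` have distinct index triples
`a < b < c` and `d < e < g`. Comparing first the middle, then the smallest, then the
largest indices, one of the intervals `[a, b]`, `[b, c]`, `[d, e]`, `[e, g]` contains two
indices of one triple and at most one of the other, and misses the largest index of the
other; its split puts `Y` and `Y'` on different sides.
-/

namespace InjectiveSplitSystems

open Finset

variable {α : Type*} [DecidableEq α]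

theorem exists_lt_lt_eq_of_card_eq_three {β : Type*} [LinearOrder β] {s : Finset β}
    (hs : #s = 3) : ∃ a b c, a < b ∧ b < c ∧ s = {a, b, c} := by
  let e := s.orderEmbOfFin hs
  refine ⟨e 0, e 1, e 2, e.strictMono (by decide), e.strictMono (by decide), ?_⟩
  ext x
  rw [← mem_coe, ← range_orderEmbOfFin s hs, Set.mem_range]
  simp only [Fin.exists_fin_succ, Fin.exists_fin_zero, mem_insert, mem_singleton]
  grind

theorem exists_Icc_two_le_card_inter {a b c d e g : ℕ} (hab : a < b) (hbc : b < c)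
    (hde : d < e) (heg : e < g) (hlt : b < e ∨ b = e ∧ (d < a ∨ d = a ∧ c < g)) :
    ∃ i j, a ≤ i ∧ i ≤ j ∧ j < g ∧
      2 ≤ #({a, b, c} ∩ Icc i j) ∧ #({d, e, g} ∩ Icc i j) ≤ 1 := by
  by_cases hfirst : b < e ∨ d < a
  · refine ⟨a, b, le_rfl, hab.le, by omega, ?_, ?_⟩
    · have hpair : ({a, b, c} : Finset ℕ) ∩ Icc a b = {a, b} := by
        ext x; simp only [mem_inter, mem_insert, mem_singleton, mem_Icc]; omega
      rw [hpair, card_pair hab.ne]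
    · have hone : ({d, e, g} : Finset ℕ) ∩ Icc a b ⊆ {if b < e then d else e} := by
        intro x; split_ifs <;> simp only [mem_inter, mem_insert, mem_singleton, mem_Icc] <;> omega
      simpa using card_le_card hone
  · refine ⟨b, c, hab.le, hbc.le, by omega, ?_, ?_⟩
    · have hpair : ({a, b, c} : Finset ℕ) ∩ Icc b c = {b, c} := by
        ext x; simp only [mem_inter, mem_insert, mem_singleton, mem_Icc]; omega
      rw [hpair, card_pair hbc.ne]
    · have hone : ({d, e, g} : Finset ℕ) ∩ Icc b c ⊆ {e} := by
        intro x; simp only [mem_inter, mem_insert, mem_singleton, mem_Icc]; omega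
      simpa using card_le_card hone

theorem exists_Icc_separating {P P' : Finset ℕ} {m n : ℕ} (hP : #P = 3) (hP' : #P' = 3)
    (hPmn : P ⊆ Icc m n) (hP'mn : P' ⊆ Icc m n) (hne : P ≠ P') :
    ∃ i j, m ≤ i ∧ i ≤ j ∧ j < n ∧
      (2 ≤ #(P ∩ Icc i j) ∧ #(P' ∩ Icc i j) ≤ 1 ∨ #(P ∩ Icc i j) ≤ 1 ∧ 2 ≤ #(P' ∩ Icc i j)) := by
  obtain ⟨a, b, c, hab, hbc, rfl⟩ := exists_lt_lt_eq_of_card_eq_three hP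
  obtain ⟨d, e, g, hde, heg, rfl⟩ := exists_lt_lt_eq_of_card_eq_three hP'
  have ha := mem_Icc.1 (hPmn (by simp : a ∈ ({a, b, c} : Finset ℕ)))
  have hc := mem_Icc.1 (hPmn (by simp : c ∈ ({a, b, c} : Finset ℕ)))
  have hd := mem_Icc.1 (hP'mn (by simp : d ∈ ({d, e, g} : Finset ℕ)))
  have hg := mem_Icc.1 (hP'mn (by simp : g ∈ ({d, e, g} : Finset ℕ)))
  by_cases hlt : b < e ∨ b = e ∧ (d < a ∨ d = a ∧ c < g)
  · obtain ⟨i, j, hi, hij, hj, hsep⟩ := exists_Icc_two_le_card_inter hab hbc hde heg hlt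
    exact ⟨i, j, by omega, hij, by omega, Or.inl hsep⟩
  by_cases hgt : e < b ∨ e = b ∧ (a < d ∨ a = d ∧ g < c)
  · obtain ⟨i, j, hi, hij, hj, hsep⟩ := exists_Icc_two_le_card_inter hde heg hab hbc hgt
    exact ⟨i, j, by omega, hij, by omega, Or.inr hsep.symm⟩
  obtain ⟨rfl, rfl, rfl⟩ : a = d ∧ b = e ∧ c = g := by omega
  exact absurd rfl hne

section Labelling

variable {β : Type*} {f : β → α} {s : Finset β} {Y : Finset α}

theorem image_filter_mem (hY : Y ⊆ s.image f) : (s.filter (f · ∈ Y)).image f = Y := by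
  ext y
  simp only [mem_image, mem_filter]
  exact ⟨fun ⟨_, ⟨_, hk⟩, hy⟩ => hy ▸ hk, fun hy => (mem_image.1 (hY hy)).imp
    fun k ⟨hk, hky⟩ => ⟨⟨hk, hky ▸ hy⟩, hky⟩⟩

theorem card_filter_mem (hf : Set.InjOn f s) (hY : Y ⊆ s.image f) :
    #(s.filter (f · ∈ Y)) = #Y := by
  rw [← card_image_of_injOn (hf.mono (filter_subset _ s)), image_filter_mem hY]

theorem card_inter_image [DecidableEq β] (hf : Set.InjOn f s) {t : Finset β} (ht : t ⊆ s)
    (Y : Finset α) :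
    #(Y ∩ t.image f) = #(s.filter (f · ∈ Y) ∩ t) := by
  have hYt : Y ∩ t.image f = (s.filter (f · ∈ Y) ∩ t).image f := by
    ext y
    simp only [mem_inter, mem_image, mem_filter]
    constructor
    · rintro ⟨hy, k, hk, rfl⟩
      exact ⟨k, ⟨⟨ht hk, hy⟩, hk⟩, rfl⟩
    · rintro ⟨k, ⟨⟨-, hy⟩, hk⟩, rfl⟩
      exact ⟨hy, k, hk, rfl⟩
  rw [hYt, card_image_of_injOn (hf.mono fun k hk => (mem_filter.1 (mem_inter.1 hk).1).1)]

end Labelling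

theorem isSplit_insert_sdiff {X A : Finset α} (hAX : A ⊂ X) (hA : A.Nonempty) :
    IsSplit X {A, X \ A} :=
  ⟨A, X \ A, rfl, union_sdiff_of_subset hAX.subset, inter_sdiff_self A X, hA.ne_empty,
    (sdiff_nonempty.2 (not_subset_of_ssubset hAX)).ne_empty⟩

theorem IsSplitSystem.insert {X : Finset α} {𝒮 : Finset (Finset (Finset α))}
    {S : Finset (Finset α)} (h𝒮 : IsSplitSystem X 𝒮) (hS : IsSplit X S) :
    IsSplitSystem X (insert S 𝒮) :=
  ⟨forall_mem_insert _ _ _ |>.2 ⟨hS, h𝒮.1⟩, fun x hx => mem_insert_of_mem (h𝒮.2 x hx)⟩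

theorem IsMaximalCircular.mem_of_isCircular_insert {X : Finset α}
    {𝒮 : Finset (Finset (Finset α))} {S : Finset (Finset α)} (hmax : IsMaximalCircular X 𝒮)
    (h𝒮 : IsSplitSystem X 𝒮) (hS : IsSplit X S) (hc : IsCircular X (insert S 𝒮)) : S ∈ 𝒮 := by
  rw [← hmax.2 _ (h𝒮.insert hS) hc (subset_insert S 𝒮)]
  exact mem_insert_self S 𝒮

theorem IsMaximalCircular.arc_split_mem {X : Finset α} {𝒮 : Finset (Finset (Finset α))}
    (hmax : IsMaximalCircular X 𝒮) (h𝒮 : IsSplitSystem X 𝒮) {f : ℕ → α}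
    (hf : Set.InjOn f ↑(Icc 1 X.card)) (himg : (Icc 1 X.card).image f = X)
    (hform : ∀ S ∈ 𝒮, ∃ i j : ℕ, 1 ≤ i ∧ i ≤ j ∧ j ≤ X.card ∧
      S = {(Icc i j).image f, X \ (Icc i j).image f})
    {i j : ℕ} (hi : 1 ≤ i) (hij : i ≤ j) (hj : j < X.card) :
    ({(Icc i j).image f, X \ (Icc i j).image f} : Finset (Finset α)) ∈ 𝒮 := by
  have hsub : (Icc i j).image f ⊆ X := himg ▸ image_subset_image (Icc_subset_Icc hi hj.le)
  have hne : (Icc i j).image f ≠ X := by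
    intro h
    have := h ▸ card_image_le (s := Icc i j) (f := f)
    simp only [Nat.card_Icc] at this
    omega
  refine hmax.mem_of_isCircular_insert h𝒮
    (isSplit_insert_sdiff (ssubset_of_subset_of_ne hsub hne) (by simp [hij])) ?_
  exact ⟨f, hf, himg, forall_mem_insert _ _ _ |>.2 ⟨⟨i, j, hi, hij, hj.le, rfl⟩, hform⟩⟩

theorem phiNe.symm {Y Y' : Finset α} {S : Finset (Finset α)} (h : phiNe Y Y' S) :
    phiNe Y' Y S := by
  obtain ⟨t, ht, t', ht', hne, hY, hY'⟩ := h
  exact ⟨t', ht', t, ht, hne.symm, hY', hY⟩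

theorem phiNe_insert_sdiff {X A Y Y' : Finset α} (hY' : Y' ⊆ X) (hY'3 : #Y' = 3)
    (hYA : 2 ≤ #(Y ∩ A)) (hY'A : #(Y' ∩ A) ≤ 1) : phiNe Y Y' {A, X \ A} := by
  have hA : A.Nonempty := (card_pos.1 (by omega : 0 < #(Y ∩ A))).mono inter_subset_right
  refine ⟨A, mem_insert_self _ _, X \ A, mem_insert_of_mem (mem_singleton_self _), ?_, hYA, ?_⟩
  · intro h
    have hdisj : Disjoint A (X \ A) := disjoint_sdiff
    rw [← h] at hdisj
    exact hA.ne_empty (disjoint_self.1 hdisj)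
  · have hcompl : Y' ∩ (X \ A) = Y' \ A := by
      rw [← inter_sdiff_assoc, inter_eq_left.2 hY']
    have := card_sdiff_add_card_inter Y' A
    rw [hcompl]
    omega

theorem statement2_general (X : Finset α)
    (𝒮 : Finset (Finset (Finset α))) (h𝒮 : IsSplitSystem X 𝒮)
    (hmax : IsMaximalCircular X 𝒮) :
    IsInjective X 𝒮 := by
  obtain ⟨f, hf, himg, hform⟩ := hmax.1
  intro Y Y' hY hY' hY3 hY'3 hne
  have hYf : Y ⊆ (Icc 1 X.card).image f := himg.symm ▸ hY
  have hY'f : Y' ⊆ (Icc 1 X.card).image f := himg.symm ▸ hY'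
  have hPP' : (Icc 1 X.card).filter (f · ∈ Y) ≠ (Icc 1 X.card).filter (f · ∈ Y') :=
    fun h => hne (by rw [← image_filter_mem hYf, ← image_filter_mem hY'f, h])
  obtain ⟨i, j, hi, hij, hj, hsep⟩ := exists_Icc_separating
    ((card_filter_mem hf hYf).trans hY3) ((card_filter_mem hf hY'f).trans hY'3)
    (filter_subset _ _) (filter_subset _ _) hPP'
  have hS := hmax.arc_split_mem h𝒮 hf himg hform hi hij hj
  simp only [← card_inter_image hf (Icc_subset_Icc hi hj.le)] at hsep
  rcases hsep with ⟨hYA, hY'A⟩ | ⟨hYA, hY'A⟩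
  · exact ⟨_, hS, phiNe_insert_sdiff hY' hY'3 hYA hY'A⟩
  · exact ⟨_, hS, (phiNe_insert_sdiff hY hY3 hY'A hYA).symm⟩

/-- A maximal circular split system on `X` (`|X| ≥ 4`) is injective. -/
theorem statement2 (X : Finset α) (hX : 4 ≤ X.card)
    (𝒮 : Finset (Finset (Finset α))) (h𝒮 : IsSplitSystem X 𝒮)
    (hmax : IsMaximalCircular X 𝒮) :
    IsInjective X 𝒮 :=
  statement2_general X 𝒮 h𝒮 hmax

end InjectiveSplitSystems
end

section
/- Let S be a split of a finite set X with |X| ≥ 5, let x, y, z, p be distinct elements of X with Y = {x,y,z,p}, and let q ∈ X−Y. Then φ_{{x,y,z}}(S) ≠ φ_{{x,p,q}}(S) if and only if the restriction S|_{Y∪{q}} is one of the six splits yz|xpq, pq|xyz, xy|zpq, xz|ypq, xp|yzq, xq|yzp of Y∪{q}. -/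
namespace InjectiveSplitSystems

open Finset

variable {α : Type*} [DecidableEq α]

/-! Both sides only depend on the trace `A ∩ {x, y, z, p, q}` of a part `A` of `S`. Relabelling
the five points by `Fin 5` turns the equivalence into a finite check over the 32 subsets of a
five-element set. -/

/-- `phiNe Y Y' {A, Aᶜ}`, with the complement of `A` taken inside `Y` and `Y'`. -/
def PhiNeCompl (Y Y' A : Finset α) : Prop :=
  (2 ≤ #(Y ∩ A) ∧ 2 ≤ #(Y' \ A)) ∨ (2 ≤ #(Y \ A) ∧ 2 ≤ #(Y' ∩ A))

theorem phiNe_pair_iff {Y Y' A B : Finset α} (hAB : A ≠ B) :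
    phiNe Y Y' {A, B} ↔
      (2 ≤ #(Y ∩ A) ∧ 2 ≤ #(Y' ∩ B)) ∨ (2 ≤ #(Y ∩ B) ∧ 2 ≤ #(Y' ∩ A)) := by
  simp only [phiNe, mem_insert, mem_singleton, exists_eq_or_imp, exists_eq_left, ne_eq,
    not_true_eq_false, false_and, or_false, false_or, hAB, Ne.symm hAB, not_false_eq_true,
    true_and]

theorem inter_eq_sdiff_of_partition {X Y A B : Finset α} (hunion : A ∪ B = X)
    (hinter : A ∩ B = ∅) (hY : Y ⊆ X) : Y ∩ B = Y \ A := by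
  have hB : B = X \ A := by
    rw [← hunion, union_sdiff_cancel_left (disjoint_iff_inter_eq_empty.mpr hinter)]
  rw [hB, ← inter_sdiff_assoc, inter_eq_left.mpr hY]

theorem phiNe_pair_iff_phiNeCompl {X Y Y' A B : Finset α} (hunion : A ∪ B = X)
    (hinter : A ∩ B = ∅) (hB : B ≠ ∅) (hY : Y ⊆ X) (hY' : Y' ⊆ X) :
    phiNe Y Y' {A, B} ↔ PhiNeCompl Y Y' A := by
  have hAB : A ≠ B := fun h => hB (by rwa [h, inter_self] at hinter)
  rw [phiNe_pair_iff hAB, PhiNeCompl, inter_eq_sdiff_of_partition hunion hinter hY,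
    inter_eq_sdiff_of_partition hunion hinter hY']

theorem restrictSplit_pair {X Z A B : Finset α} (hunion : A ∪ B = X) (hinter : A ∩ B = ∅)
    (hZ : Z ⊆ X) : restrictSplit {A, B} Z = {A ∩ Z, Z \ A} := by
  rw [restrictSplit, image_insert, image_singleton, inter_comm B,
    inter_eq_sdiff_of_partition hunion hinter hZ]

theorem phiNeCompl_inter_of_subset {Y Y' Z : Finset α} (A : Finset α) (hY : Y ⊆ Z)
    (hY' : Y' ⊆ Z) : PhiNeCompl Y Y' (A ∩ Z) ↔ PhiNeCompl Y Y' A := by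
  have hinter {W : Finset α} (hW : W ⊆ Z) : W ∩ (A ∩ Z) = W ∩ A := by
    rw [inter_comm A, ← inter_assoc, inter_eq_left.mpr hW]
  have hsdiff {W : Finset α} (hW : W ⊆ Z) : W \ (A ∩ Z) = W \ A := by
    rw [sdiff_inter_distrib_right, sdiff_eq_empty_iff_subset.mpr hW, union_empty]
  rw [PhiNeCompl, PhiNeCompl, hinter hY, hinter hY', hsdiff hY, hsdiff hY']

theorem phiNeCompl_map {β : Type*} [DecidableEq β] (e : β ↪ α) (Y Y' A : Finset β) :
    PhiNeCompl (Y.map e) (Y'.map e) (A.map e) ↔ PhiNeCompl Y Y' A := by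
  simp only [PhiNeCompl, ← map_inter, ← Finset.map_sdiff, card_map]

theorem map_pair_eq_map_pair_iff {β : Type*} [DecidableEq β] (e : β ↪ α) (a b c d : Finset β) :
    ({a.map e, b.map e} : Finset (Finset α)) = {c.map e, d.map e} ↔
      ({a, b} : Finset (Finset β)) = {c, d} := by
  rw [← map_inj (f := (mapEmbedding e).toEmbedding)]
  simp

theorem phiNeCompl_iff_fin_five (t : Finset (Fin 5)) :
    PhiNeCompl {0, 1, 2} {0, 3, 4} t ↔
      ({t, univ \ t} = ({{1, 2}, {0, 3, 4}} : Finset (Finset (Fin 5))) ∨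
       {t, univ \ t} = ({{3, 4}, {0, 1, 2}} : Finset (Finset (Fin 5))) ∨
       {t, univ \ t} = ({{0, 1}, {2, 3, 4}} : Finset (Finset (Fin 5))) ∨
       {t, univ \ t} = ({{0, 2}, {1, 3, 4}} : Finset (Finset (Fin 5))) ∨
       {t, univ \ t} = ({{0, 3}, {1, 2, 4}} : Finset (Finset (Fin 5))) ∨
       {t, univ \ t} = ({{0, 4}, {1, 2, 3}} : Finset (Finset (Fin 5)))) := by
  revert t
  unfold PhiNeCompl
  decide

theorem phiNeCompl_five_points_iff {x y z p q : α} (hdist : [x, y, z, p, q].Nodup)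
    (A : Finset α) :
    PhiNeCompl {x, y, z} {x, p, q} A ↔
      ({A ∩ {x, y, z, p, q}, {x, y, z, p, q} \ A} = ({{y, z}, {x, p, q}} : Finset (Finset α)) ∨
       {A ∩ {x, y, z, p, q}, {x, y, z, p, q} \ A} = ({{p, q}, {x, y, z}} : Finset (Finset α)) ∨
       {A ∩ {x, y, z, p, q}, {x, y, z, p, q} \ A} = ({{x, y}, {z, p, q}} : Finset (Finset α)) ∨
       {A ∩ {x, y, z, p, q}, {x, y, z, p, q} \ A} = ({{x, z}, {y, p, q}} : Finset (Finset α)) ∨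
       {A ∩ {x, y, z, p, q}, {x, y, z, p, q} \ A} = ({{x, p}, {y, z, q}} : Finset (Finset α)) ∨
       {A ∩ {x, y, z, p, q}, {x, y, z, p, q} \ A} = ({{x, q}, {y, z, p}} : Finset (Finset α))) := by
  let e : Fin 5 ↪ α := ⟨![x, y, z, p, q], List.nodup_ofFn.mp hdist⟩
  have hZ : univ.map e = {x, y, z, p, q} := by
    rw [show (univ : Finset (Fin 5)) = {0, 1, 2, 3, 4} from rfl]
    simp [e]
  have hsub : A ∩ {x, y, z, p, q} ⊆ univ.map e := hZ ▸ inter_subset_right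
  obtain ⟨t, -, ht⟩ := subset_map_iff.mp hsub
  rw [← phiNeCompl_inter_of_subset (Z := {x, y, z, p, q}) A (by simp [insert_subset_iff])
      (by simp [insert_subset_iff]), ← sdiff_inter_self_right, ht]
  have h := phiNeCompl_iff_fin_five t
  rw [← phiNeCompl_map e] at h
  simp only [← map_pair_eq_map_pair_iff e, Finset.map_sdiff, hZ] at h
  simpa [e] using h

theorem statement6_general (X : Finset α)
    (S : Finset (Finset α)) (hS : IsSplit X S)
    (x y z p q : α) (hx : x ∈ X) (hy : y ∈ X) (hz : z ∈ X) (hp : p ∈ X) (hq : q ∈ X)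
    (hdist : ([x, y, z, p, q] : List α).Pairwise (· ≠ ·)) :
    phiNe {x, y, z} {x, p, q} S ↔
      (restrictSplit S {x, y, z, p, q} = ({{y, z}, {x, p, q}} : Finset (Finset α)) ∨
       restrictSplit S {x, y, z, p, q} = ({{p, q}, {x, y, z}} : Finset (Finset α)) ∨
       restrictSplit S {x, y, z, p, q} = ({{x, y}, {z, p, q}} : Finset (Finset α)) ∨
       restrictSplit S {x, y, z, p, q} = ({{x, z}, {y, p, q}} : Finset (Finset α)) ∨
       restrictSplit S {x, y, z, p, q} = ({{x, p}, {y, z, q}} : Finset (Finset α)) ∨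
       restrictSplit S {x, y, z, p, q} = ({{x, q}, {y, z, p}} : Finset (Finset α))) := by
  obtain ⟨A, B, rfl, hunion, hinter, -, hB⟩ := hS
  have hZX : ({x, y, z, p, q} : Finset α) ⊆ X := by simp [insert_subset_iff, *]
  rw [phiNe_pair_iff_phiNeCompl hunion hinter hB (by simp [insert_subset_iff, *])
    (by simp [insert_subset_iff, *]), restrictSplit_pair hunion hinter hZX]
  exact phiNeCompl_five_points_iff hdist A

/-- For a split `S` of `X` (`|X| ≥ 5`) and distinct `x,y,z,p,q ∈ X`:
`φ_{xyz}(S) ≠ φ_{xpq}(S)` iff `S|_{x,y,z,p,q}` is one of the six splits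
`yz|xpq`, `pq|xyz`, `xy|zpq`, `xz|ypq`, `xp|yzq`, `xq|yzp`. -/
theorem statement6 (X : Finset α) (hX : 5 ≤ X.card)
    (S : Finset (Finset α)) (hS : IsSplit X S)
    (x y z p q : α) (hx : x ∈ X) (hy : y ∈ X) (hz : z ∈ X) (hp : p ∈ X) (hq : q ∈ X)
    (hdist : ([x, y, z, p, q] : List α).Pairwise (· ≠ ·)) :
    phiNe {x, y, z} {x, p, q} S ↔
      (restrictSplit S {x, y, z, p, q} = ({{y, z}, {x, p, q}} : Finset (Finset α)) ∨
       restrictSplit S {x, y, z, p, q} = ({{p, q}, {x, y, z}} : Finset (Finset α)) ∨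
       restrictSplit S {x, y, z, p, q} = ({{x, y}, {z, p, q}} : Finset (Finset α)) ∨
       restrictSplit S {x, y, z, p, q} = ({{x, z}, {y, p, q}} : Finset (Finset α)) ∨
       restrictSplit S {x, y, z, p, q} = ({{x, p}, {y, z, q}} : Finset (Finset α)) ∨
       restrictSplit S {x, y, z, p, q} = ({{x, q}, {y, z, p}} : Finset (Finset α))) :=
  statement6_general X S hS x y z p q hx hy hz hp hq hdist

end InjectiveSplitSystems
end

section
/- Let 𝒮 be a split system on a finite set X. If 𝒮 5-dices X and |X| ≥ 6, then for every 6-subset Y of X the restriction 𝒮|_Y contains a 3-split or at least eight 2-splits. -/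
namespace InjectiveSplitSystems

open Finset

variable {α : Type*} [DecidableEq α]

/-! Let `Y` be a 6-set such that `𝒮|_Y` has no 3-split, and let `y ∈ Y`. Every 2-split
`P | (Y - y - P)` of `𝒮|_{Y - y}` is the restriction of some `A | B ∈ 𝒮` with `A ∩ (Y - y) = P`;
if `y ∈ A`, then `(A ∩ Y) | (B ∩ Y)` would be a 3-split of `𝒮|_Y`, so `y ∈ B` and `P | Y - P` is a
2-split of `𝒮|_Y`. Hence every `y ∈ Y` avoids at least five of the pairs `P` with `P | Y - P ∈ 𝒮|_Y`,
while each such pair is avoided by exactly four elements of `Y`; double counting gives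
`4 · #pairs ≥ 6 · 5`, so there are at least eight such pairs. -/

lemma _root_.Finset.pair_eq_pair_iff {β : Type*} [DecidableEq β] {a b c d : β} :
    ({a, b} : Finset β) = {c, d} ↔ a = c ∧ b = d ∨ a = d ∧ b = c := by
  rw [← coe_inj, coe_pair, coe_pair, Set.pair_eq_pair_iff]

section Splits

variable {X Y Z P A B : Finset α} {𝒮 : Finset (Finset (Finset α))} {r : ℕ}

lemma mem_restrictSS {T : Finset (Finset α)} :
    T ∈ restrictSS 𝒮 Y ↔ (∃ S ∈ 𝒮, restrictSplit S Y = T) ∧ ∀ t ∈ T, t ≠ ∅ := by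
  simp [restrictSS]

lemma pair_mem_restrictSS (hS : {A, B} ∈ 𝒮) (hA : A ∩ Y ≠ ∅) (hB : B ∩ Y ≠ ∅) :
    {A ∩ Y, B ∩ Y} ∈ restrictSS 𝒮 Y :=
  mem_restrictSS.2 ⟨⟨_, hS, by simp [restrictSplit]⟩, by simp [hA, hB]⟩

lemma IsRSplit.exists_eq_pair_sdiff {S : Finset (Finset α)} (h : IsRSplit Z r S) :
    ∃ P ⊆ Z, P.card = r ∧ S = {P, Z \ P} := by
  obtain ⟨⟨A, B, rfl, hUn, hInt, -, -⟩, ⟨C, hC, hCr⟩, -⟩ := h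
  have hdisj : Disjoint A B := disjoint_iff_inter_eq_empty.2 hInt
  rcases mem_insert.1 hC with rfl | hC
  · exact ⟨C, hUn ▸ subset_union_left, hCr, by rw [← hUn, union_sdiff_cancel_left hdisj]⟩
  rw [mem_singleton] at hC
  subst hC
  refine ⟨C, hUn ▸ subset_union_right, hCr, ?_⟩
  rw [← hUn, union_sdiff_cancel_right hdisj, pair_comm]

lemma isRSplit_pair_sdiff (hPY : P ⊆ Y) (hP : P.card = r) (hr : 0 < r) (hrY : r + r ≤ Y.card) :
    IsRSplit Y r {P, Y \ P} := by
  have hc : (Y \ P).card = Y.card - r := by rw [card_sdiff_of_subset hPY, hP]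
  refine ⟨⟨P, Y \ P, rfl, union_sdiff_of_subset hPY, inter_sdiff_self P Y, ?_, ?_⟩,
    ⟨P, mem_insert_self _ _, hP⟩, ?_⟩
  · rw [← nonempty_iff_ne_empty, ← card_pos]; omega
  · rw [← nonempty_iff_ne_empty, ← card_pos]; omega
  · simp only [mem_insert, mem_singleton, forall_eq_or_imp, forall_eq]
    omega

lemma injOn_pair_sdiff {k : ℕ} (hk : k + k ≠ Y.card) :
    Set.InjOn (fun P => ({P, Y \ P} : Finset (Finset α))) (Y.powersetCard k) := by
  intro P hP P' hP' h
  rw [mem_coe, mem_powersetCard] at hP hP'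
  rcases pair_eq_pair_iff.1 h with ⟨hPP', -⟩ | ⟨hPP', -⟩
  · exact hPP'
  · have := card_sdiff_of_subset hP'.1
    rw [← hPP', hP.2, hP'.2] at this
    omega

lemma insert_mem_restrictSS_insert (h𝒮 : ∀ S ∈ 𝒮, IsSplit X S) {y : α} (hy : y ∈ X)
    {Q : Finset α} (hT : {P, Q} ∈ restrictSS 𝒮 Z) :
    {insert y P, Q} ∈ restrictSS 𝒮 (insert y Z) ∨ {P, insert y Q} ∈ restrictSS 𝒮 (insert y Z) := by
  obtain ⟨⟨S, hS, hSPQ⟩, hne⟩ := mem_restrictSS.1 hT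
  obtain ⟨A, B, rfl, hUn, hInt, -, -⟩ := h𝒮 S hS
  simp only [restrictSplit, image_insert, image_singleton] at hSPQ
  simp only [mem_insert, mem_singleton, forall_eq_or_imp, forall_eq] at hne
  wlog hAB : A ∩ Z = P ∧ B ∩ Z = Q generalizing A B
  · obtain ⟨hA, hB⟩ := (pair_eq_pair_iff.1 hSPQ).resolve_left hAB
    exact this B A (pair_comm A B ▸ hS) (union_comm A B ▸ hUn) (inter_comm A B ▸ hInt)
      (by rw [hA, hB]) ⟨hB, hA⟩
  obtain ⟨rfl, rfl⟩ := hAB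
  have hyAB : y ∉ A ∨ y ∉ B := by
    by_contra! h
    simpa [hInt] using mem_inter.2 h
  rcases hyAB with hyA | hyB
  · have hyB : y ∈ B := (mem_union.1 (hUn ▸ hy)).resolve_left hyA
    right
    simpa [inter_insert_of_notMem hyA, inter_insert_of_mem hyB] using
      pair_mem_restrictSS (Y := insert y Z) hS (by simpa [hyA] using hne.1) (by simp [hyB])
  · have hyA : y ∈ A := (mem_union.1 (hUn ▸ hy)).resolve_right hyB
    left
    simpa [inter_insert_of_notMem hyB, inter_insert_of_mem hyA] using
      pair_mem_restrictSS (Y := insert y Z) hS (by simp [hyA]) (by simpa [hyB] using hne.2)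

end Splits

noncomputable def splitPairs (𝒮 : Finset (Finset (Finset α))) (Y : Finset α) : Finset (Finset α) :=
  (Y.powersetCard 2).filter fun P => {P, Y \ P} ∈ restrictSS 𝒮 Y

section SixSets

variable {X Y : Finset α} {𝒮 : Finset (Finset (Finset α))}
  (h𝒮 : ∀ S ∈ 𝒮, IsSplit X S) (hYX : Y ⊆ X) (hY : Y.card = 6)
  (h3 : ¬ ∃ S ∈ restrictSS 𝒮 Y, IsRSplit Y 3 S)
include h𝒮 hYX hY h3

lemma exists_mem_splitPairs_of_isRSplit_erase {y : α} (hy : y ∈ Y) {T : Finset (Finset α)}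
    (hT : T ∈ restrictSS 𝒮 (Y.erase y)) (hT2 : IsRSplit (Y.erase y) 2 T) :
    ∃ P ∈ (splitPairs 𝒮 Y).filter (y ∉ ·), T = {P, Y.erase y \ P} := by
  obtain ⟨P, hPZ, hP2, rfl⟩ := hT2.exists_eq_pair_sdiff
  have hyP : y ∉ P := fun h => by simpa using hPZ h
  have hPY : P ⊆ Y := hPZ.trans (erase_subset y Y)
  refine ⟨P, ?_, rfl⟩
  simp only [splitPairs, mem_filter, mem_powersetCard]
  refine ⟨⟨⟨hPY, hP2⟩, ?_⟩, hyP⟩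
  rcases insert_mem_restrictSS_insert h𝒮 (hYX hy) hT with h | h <;> rw [insert_erase hy] at h
  · refine absurd ⟨_, h, ?_⟩ h3
    have hPyY : insert y P ⊆ Y := insert_subset hy hPY
    convert isRSplit_pair_sdiff hPyY (by rw [card_insert_of_notMem hyP, hP2]) (by norm_num)
      (by omega) using 2
    rw [sdiff_insert, erase_sdiff_comm]
  · rwa [← insert_sdiff_of_notMem _ hyP, insert_erase hy] at h

lemma five_le_card_filter_notMem_splitPairs (h5 : FiveDices X 𝒮) {y : α} (hy : y ∈ Y) :
    5 ≤ ((splitPairs 𝒮 Y).filter (y ∉ ·)).card := by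
  have hZ : (Y.erase y).card = 5 := by rw [card_erase_of_mem hy, hY]
  obtain ⟨𝒯, h𝒯, h𝒯5, h𝒯2⟩ := h5.resolve_left (by have := card_le_card hYX; omega)
    (Y.erase y) ((erase_subset y Y).trans hYX) hZ
  calc 5 ≤ 𝒯.card := h𝒯5
    _ ≤ _ := card_le_card_of_surjOn (fun P => {P, Y.erase y \ P}) fun T hT => by
      obtain ⟨P, hP, rfl⟩ :=
        exists_mem_splitPairs_of_isRSplit_erase h𝒮 hYX hY h3 hy (h𝒯 hT) (h𝒯2 T hT)
      exact ⟨P, hP, rfl⟩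

lemma eight_le_card_splitPairs (h5 : FiveDices X 𝒮) : 8 ≤ (splitPairs 𝒮 Y).card := by
  have := card_mul_le_card_mul (fun y P => y ∉ P) (m := 5) (n := 4)
    (fun y hy => five_le_card_filter_notMem_splitPairs h𝒮 hYX hY h3 h5 hy) fun P hP => by
      have hP := (mem_powersetCard.1 (mem_filter.1 hP).1)
      rw [bipartiteBelow, filter_notMem_eq_sdiff, card_sdiff_of_subset hP.1, hP.2, hY]
  omega

end SixSets

theorem statement9_general (X : Finset α) (𝒮 : Finset (Finset (Finset α)))
    (h𝒮 : IsSplitSystem X 𝒮) (h5 : FiveDices X 𝒮) :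
    ∀ Y ⊆ X, Y.card = 6 →
      (∃ S ∈ restrictSS 𝒮 Y, IsRSplit Y 3 S) ∨
      ∃ 𝒯 ⊆ restrictSS 𝒮 Y, 8 ≤ 𝒯.card ∧ ∀ S ∈ 𝒯, IsRSplit Y 2 S := by
  intro Y hYX hY
  refine or_iff_not_imp_left.2 fun h3 => ?_
  have hpairs : ∀ P ∈ splitPairs 𝒮 Y, P ∈ Y.powersetCard 2 ∧ {P, Y \ P} ∈ restrictSS 𝒮 Y :=
    fun P hP => mem_filter.1 hP
  refine ⟨(splitPairs 𝒮 Y).image fun P => {P, Y \ P}, ?_, ?_, ?_⟩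
  · simpa [image_subset_iff] using fun P hP => (hpairs P hP).2
  · rw [card_image_of_injOn ((injOn_pair_sdiff (by omega)).mono fun P hP => (hpairs P hP).1)]
    exact eight_le_card_splitPairs h𝒮.1 hYX hY h3 h5
  · simp only [mem_image, forall_exists_index, and_imp, forall_apply_eq_imp_iff₂]
    intro P hP
    have hP := mem_powersetCard.1 (hpairs P hP).1
    exact isRSplit_pair_sdiff hP.1 hP.2 (by norm_num) (by omega)

/-- If `𝒮` 5-dices `X` and `|X| ≥ 6`, then for every 6-subset `Y` of
`X` the restriction `𝒮|_Y` contains a 3-split or at least eight 2-splits. -/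
theorem statement9 (X : Finset α) (𝒮 : Finset (Finset (Finset α)))
    (h𝒮 : IsSplitSystem X 𝒮) (h5 : FiveDices X 𝒮) (hX : 6 ≤ X.card) :
    ∀ Y ⊆ X, Y.card = 6 →
      (∃ S ∈ restrictSS 𝒮 Y, IsRSplit Y 3 S) ∨
      ∃ 𝒯 ⊆ restrictSS 𝒮 Y, 8 ≤ 𝒯.card ∧ ∀ S ∈ 𝒯, IsRSplit Y 2 S :=
  statement9_general X 𝒮 h𝒮 h5

end InjectiveSplitSystems
end

section
/- Let 𝒮 be a split system on a finite set X with |X| ≥ 4. Then 𝒮 4-dices X if and only if for all 3-subsets A, B of X with |A ∩ B| = 2 there exists S ∈ 𝒮 with φ_A(S) ≠ φ_B(S). -/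
namespace InjectiveSplitSystems

open Finset

variable {α : Type*} [DecidableEq α]

/-!
Let `Y = A ∪ B`, so that `A = Y - d` and `B = Y - c` for the two points `c ∈ A - B`, `d ∈ B - A`.
If `φ_A(S) ≠ φ_B(S)`, both sides of `S` contain two points of `Y`, so `S|_Y` is a 2-split of `Y`;
on a 2-split, `φ_{Y-d}` is the side avoiding `d`. Hence `φ_A(S) ≠ φ_B(S)` exactly when `S|_Y` is a
2-split separating `c` from `d`. Only one 2-split of `Y` keeps `c` and `d` together, so two distinct
2-splits give such an `S`. Conversely, 2-splits separating `x, y`, `x, z` and `y, z` cannot all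
coincide, as a bipartition cannot separate three points pairwise.
-/

def Separates (T : Finset (Finset α)) (x y : α) : Prop :=
  ∀ P ∈ T, x ∈ P → y ∉ P

lemma separates_pair_iff {P Q : Finset α} {x y : α} :
    Separates {P, Q} x y ↔ (x ∈ P → y ∉ P) ∧ (x ∈ Q → y ∉ Q) := by
  simp [Separates]

lemma card_add_card_of_union_eq {P Q Y : Finset α} (hPQ : P ∪ Q = Y) (hdisj : P ∩ Q = ∅) :
    P.card + Q.card = Y.card := by
  rw [← hPQ, card_union_of_disjoint (disjoint_iff_inter_eq_empty.2 hdisj)]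

lemma isRSplit_two_pair_iff {P Q Y : Finset α} (hY : Y.card = 4) (hPQ : P ∪ Q = Y)
    (hdisj : P ∩ Q = ∅) : IsRSplit Y 2 {P, Q} ↔ 2 ≤ P.card ∧ 2 ≤ Q.card := by
  have hsum := card_add_card_of_union_eq hPQ hdisj
  refine ⟨fun h => ⟨h.2.2 P (by simp), h.2.2 Q (by simp)⟩, fun ⟨hP, hQ⟩ => ?_⟩
  refine ⟨⟨P, Q, rfl, hPQ, hdisj, ?_, ?_⟩, ⟨P, by simp, by omega⟩, by simp [hP, hQ]⟩ <;>
    rintro rfl <;> simp at hP hQ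

lemma IsSplit.inter_eq_empty {X : Finset α} {S : Finset (Finset α)} (hS : IsSplit X S)
    {t t' : Finset α} (ht : t ∈ S) (ht' : t' ∈ S) (hne : t ≠ t') : t ∩ t' = ∅ := by
  obtain ⟨u, v, rfl, -, huv, -, -⟩ := hS
  simp only [mem_insert, mem_singleton] at ht ht'
  rcases ht with rfl | rfl <;> rcases ht' with rfl | rfl <;>
    first | exact absurd rfl hne | assumption | rwa [inter_comm]

lemma restrictSplit_eq_pair {X Y : Finset α} {S : Finset (Finset α)} (hS : IsSplit X S)
    (hYX : Y ⊆ X) : ∃ P Q, restrictSplit S Y = {P, Q} ∧ P ∪ Q = Y ∧ P ∩ Q = ∅ := by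
  obtain ⟨t, t', rfl, hu, hd, -, -⟩ := hS
  refine ⟨t ∩ Y, t' ∩ Y, by simp [restrictSplit], ?_, ?_⟩
  · rw [← union_inter_distrib_right, hu, inter_eq_right.2 hYX]
  · rw [inter_inter_inter_comm, hd, empty_inter]

lemma phiNe_restrictSplit_iff {X Y A B : Finset α} {S : Finset (Finset α)} (hS : IsSplit X S)
    (hA : A ⊆ Y) (hB : B ⊆ Y) : phiNe A B (restrictSplit S Y) ↔ phiNe A B S := by
  have hAt : ∀ t, A ∩ (t ∩ Y) = A ∩ t := fun t => by
    rw [inter_comm t, ← inter_assoc, inter_eq_left.2 hA]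
  have hBt : ∀ t, B ∩ (t ∩ Y) = B ∩ t := fun t => by
    rw [inter_comm t, ← inter_assoc, inter_eq_left.2 hB]
  simp only [phiNe, restrictSplit, mem_image, exists_exists_and_eq_and, hAt, hBt]
  refine exists_congr fun t => and_congr_right fun ht => exists_congr fun t' =>
    and_congr_right fun ht' => ⟨fun ⟨hne, h⟩ => ⟨fun h' => hne (h' ▸ rfl), h⟩,
      fun ⟨hne, hA2, hB2⟩ => ⟨fun hY => ?_, hA2, hB2⟩⟩
  have hsub : A ∩ t ⊆ t ∩ t' := fun x hx => by
    have hxY : x ∈ t ∩ Y := mem_inter.2 ⟨(mem_inter.1 hx).2, hA (mem_inter.1 hx).1⟩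
    exact mem_inter.2 ⟨(mem_inter.1 hx).2, (mem_inter.1 (hY ▸ hxY)).1⟩
  have := card_le_card hsub
  rw [hS.inter_eq_empty ht ht' hne, card_empty] at this
  omega

lemma three_le_card_of_two_le_card_erase_inter {Y u : Finset α} {d : α} (hd : d ∈ u)
    (h : 2 ≤ (Y.erase d ∩ u).card) : 3 ≤ u.card := by
  have hsub : Y.erase d ∩ u ⊆ u.erase d := fun x hx => by
    simp only [mem_inter, mem_erase] at hx ⊢
    exact ⟨hx.1.1, hx.2⟩
  have := card_le_card hsub
  rw [card_erase_of_mem hd] at this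
  omega

lemma isRSplit_two_and_separates_of_phiNe {Y P Q : Finset α} {c d : α} (hY : Y.card = 4)
    (hPQ : P ∪ Q = Y) (hdisj : P ∩ Q = ∅) (h : phiNe (Y.erase d) (Y.erase c) {P, Q}) :
    IsRSplit Y 2 {P, Q} ∧ Separates {P, Q} c d := by
  have key : ∀ P Q : Finset α, P ∪ Q = Y → P ∩ Q = ∅ → 2 ≤ (Y.erase d ∩ P).card →
      2 ≤ (Y.erase c ∩ Q).card → IsRSplit Y 2 {P, Q} ∧ Separates {P, Q} c d := by
    intro P Q hPQ hdisj hP hQ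
    have hsum := card_add_card_of_union_eq hPQ hdisj
    have hP' := hP.trans (card_le_card inter_subset_right)
    have hQ' := hQ.trans (card_le_card inter_subset_right)
    refine ⟨(isRSplit_two_pair_iff hY hPQ hdisj).2 ⟨hP', hQ'⟩, separates_pair_iff.2 ⟨?_, ?_⟩⟩
    · rintro - hdP
      have := three_le_card_of_two_le_card_erase_inter hdP hP
      omega
    · rintro hcQ -
      have := three_le_card_of_two_le_card_erase_inter hcQ hQ
      omega
  obtain ⟨u, hu, v, hv, huv, hu2, hv2⟩ := h
  simp only [mem_insert, mem_singleton] at hu hv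
  rcases hu with rfl | rfl <;> rcases hv with rfl | rfl
  · exact absurd rfl huv
  · exact key _ _ hPQ hdisj hu2 hv2
  · rw [pair_comm]
    exact key _ _ (by rwa [union_comm]) (by rwa [inter_comm]) hu2 hv2
  · exact absurd rfl huv

lemma phiNe_of_separates {Y P Q : Finset α} {c d : α} (hc : c ∈ Y) (hPQ : P ∪ Q = Y)
    (hdisj : P ∩ Q = ∅) (hP : 2 ≤ P.card) (hQ : 2 ≤ Q.card) (hsep : Separates {P, Q} c d) :
    phiNe (Y.erase d) (Y.erase c) {P, Q} := by
  wlog hcP : c ∈ P generalizing P Q with H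
  · rw [pair_comm] at hsep ⊢
    refine H (by rwa [union_comm]) (by rwa [inter_comm]) hQ hP hsep ?_
    rcases mem_union.1 (hPQ ▸ hc) with h | h
    exacts [absurd h hcP, h]
  have hcQ : c ∉ Q := fun hcQ => by simpa [hdisj] using mem_inter.2 ⟨hcP, hcQ⟩
  have hdP : d ∉ P := separates_pair_iff.1 hsep |>.1 hcP
  have hPsub : P ⊆ Y.erase d := fun x hx =>
    mem_erase.2 ⟨fun h => hdP (h ▸ hx), hPQ ▸ mem_union_left Q hx⟩
  have hQsub : Q ⊆ Y.erase c := fun x hx =>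
    mem_erase.2 ⟨fun h => hcQ (h ▸ hx), hPQ ▸ mem_union_right P hx⟩
  refine ⟨P, by simp, Q, by simp, fun h => hcQ (h ▸ hcP), ?_, ?_⟩
  · rwa [inter_eq_right.2 hPsub]
  · rwa [inter_eq_right.2 hQsub]

lemma phiNe_erase_iff {X Y : Finset α} {S : Finset (Finset α)} {c d : α} (hS : IsSplit X S)
    (hYX : Y ⊆ X) (hY : Y.card = 4) (hc : c ∈ Y) :
    phiNe (Y.erase d) (Y.erase c) S ↔
      IsRSplit Y 2 (restrictSplit S Y) ∧ Separates (restrictSplit S Y) c d := by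
  obtain ⟨P, Q, hT, hPQ, hdisj⟩ := restrictSplit_eq_pair hS hYX
  rw [← phiNe_restrictSplit_iff hS (erase_subset d Y) (erase_subset c Y), hT]
  refine ⟨isRSplit_two_and_separates_of_phiNe hY hPQ hdisj, fun ⟨hR, hsep⟩ => ?_⟩
  obtain ⟨hP, hQ⟩ := (isRSplit_two_pair_iff hY hPQ hdisj).1 hR
  exact phiNe_of_separates hc hPQ hdisj hP hQ hsep

lemma IsRSplit.eq_of_not_separates {Y : Finset α} {T : Finset (Finset α)} {c d : α}
    (hY : Y.card = 4) (hT : IsRSplit Y 2 T) (hcd : c ≠ d) (h : ¬Separates T c d) :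
    T = {{c, d}, Y \ {c, d}} := by
  obtain ⟨⟨P, Q, rfl, hPQ, hdisj, -, -⟩, -, hcard⟩ := hT
  rw [separates_pair_iff] at h
  have hsum := card_add_card_of_union_eq hPQ hdisj
  have hQ := hcard Q (by simp)
  wlog hP : c ∈ P ∧ d ∈ P generalizing P Q with H
  · rw [pair_comm]
    refine H Q P (by tauto) (by rwa [union_comm]) (by rwa [inter_comm]) (by rwa [pair_comm])
      (by omega) (hcard P (by simp)) (by tauto)
  have hPcd : P = {c, d} := (eq_of_subset_of_card_le (insert_subset hP.1
    (singleton_subset_iff.2 hP.2)) (by rw [card_pair hcd]; omega)).symm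
  rw [hPcd, ← hPcd, ← hPQ, union_sdiff_cancel_left (disjoint_iff_inter_eq_empty.2 hdisj)]

lemma IsRSplit.separates_or_separates {Y : Finset α} {T T' : Finset (Finset α)} {c d : α}
    (hY : Y.card = 4) (hT : IsRSplit Y 2 T) (hT' : IsRSplit Y 2 T') (hne : T ≠ T')
    (hcd : c ≠ d) : Separates T c d ∨ Separates T' c d := by
  by_contra! h
  exact hne ((hT.eq_of_not_separates hY hcd h.1).trans (hT'.eq_of_not_separates hY hcd h.2).symm)

lemma IsSplit.not_separates_three {Y : Finset α} {T : Finset (Finset α)} (hT : IsSplit Y T)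
    {x y z : α} (hx : x ∈ Y) (hy : y ∈ Y) (hz : z ∈ Y) (hxy : Separates T x y)
    (hxz : Separates T x z) (hyz : Separates T y z) : False := by
  obtain ⟨P, Q, rfl, hPQ, -, -, -⟩ := hT
  rw [separates_pair_iff] at hxy hxz hyz
  rw [← hPQ, mem_union] at hx hy hz
  tauto

lemma exists_ne_of_forall_separates {Y : Finset α} {R : Finset (Finset (Finset α))} {r : ℕ}
    (hY : 2 < Y.card)
    (h : ∀ y ∈ Y, ∀ z ∈ Y, y ≠ z → ∃ T ∈ R, IsRSplit Y r T ∧ Separates T y z) :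
    ∃ T ∈ R, ∃ T' ∈ R, T ≠ T' ∧ IsRSplit Y r T ∧ IsRSplit Y r T' := by
  obtain ⟨x, hx, y, hy, z, hz, hxy, hxz, hyz⟩ := two_lt_card.1 hY
  obtain ⟨T₁, hT₁, hr₁, hs₁⟩ := h x hx y hy hxy
  obtain ⟨T₂, hT₂, hr₂, hs₂⟩ := h x hx z hz hxz
  obtain ⟨T₃, hT₃, hr₃, hs₃⟩ := h y hy z hz hyz
  rcases eq_or_ne T₁ T₂ with rfl | h12
  · rcases eq_or_ne T₁ T₃ with rfl | h13
    · exact (hr₁.1.not_separates_three hx hy hz hs₁ hs₂ hs₃).elim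
    · exact ⟨T₁, hT₁, T₃, hT₃, h13, hr₁, hr₃⟩
  · exact ⟨T₁, hT₁, T₂, hT₂, h12, hr₁, hr₂⟩

lemma mem_restrictSS_iff {𝒮 : Finset (Finset (Finset α))} {Y : Finset α}
    {T : Finset (Finset α)} :
    T ∈ restrictSS 𝒮 Y ↔ (∃ S ∈ 𝒮, restrictSplit S Y = T) ∧ ∀ t ∈ T, t ≠ ∅ := by
  classical
  simp [restrictSS]

lemma restrictSplit_mem_restrictSS {𝒮 : Finset (Finset (Finset α))} {Y : Finset α}
    {S : Finset (Finset α)} (hS : S ∈ 𝒮) (h : IsSplit Y (restrictSplit S Y)) :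
    restrictSplit S Y ∈ restrictSS 𝒮 Y := by
  obtain ⟨P, Q, hT, -, -, hP, hQ⟩ := h
  refine mem_restrictSS_iff.2 ⟨⟨S, hS, rfl⟩, ?_⟩
  simp [hT, hP, hQ]

lemma exists_phiNe_erase_iff {X Y : Finset α} {𝒮 : Finset (Finset (Finset α))} {c d : α}
    (hsplit : ∀ S ∈ 𝒮, IsSplit X S) (hYX : Y ⊆ X) (hY : Y.card = 4) (hc : c ∈ Y) :
    (∃ S ∈ 𝒮, phiNe (Y.erase d) (Y.erase c) S) ↔
      ∃ T ∈ restrictSS 𝒮 Y, IsRSplit Y 2 T ∧ Separates T c d := by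
  constructor
  · rintro ⟨S, hS, hphi⟩
    have hT := (phiNe_erase_iff (hsplit S hS) hYX hY hc).1 hphi
    exact ⟨_, restrictSplit_mem_restrictSS hS hT.1.1, hT⟩
  · rintro ⟨T, hT, h2, hsep⟩
    obtain ⟨⟨S, hS, rfl⟩, -⟩ := mem_restrictSS_iff.1 hT
    exact ⟨S, hS, (phiNe_erase_iff (hsplit S hS) hYX hY hc).2 ⟨h2, hsep⟩⟩

lemma exists_subset_two_le_card_iff {β : Type*} [DecidableEq β] {R : Finset β} {p : β → Prop} :
    (∃ 𝒯 ⊆ R, 2 ≤ 𝒯.card ∧ ∀ T ∈ 𝒯, p T) ↔ ∃ T ∈ R, ∃ T' ∈ R, T ≠ T' ∧ p T ∧ p T' := by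
  constructor
  · rintro ⟨𝒯, hsub, hcard, hp⟩
    obtain ⟨T, hT, T', hT', hne⟩ := one_lt_card.1 hcard
    exact ⟨T, hsub hT, T', hsub hT', hne, hp T hT, hp T' hT'⟩
  · rintro ⟨T, hT, T', hT', hne, hpT, hpT'⟩
    refine ⟨{T, T'}, insert_subset hT (singleton_subset_iff.2 hT'), (card_pair hne).ge, ?_⟩
    simp [hpT, hpT']

lemma erase_union_eq_of_sdiff_eq_singleton {A B : Finset α} {d : α} (h : B \ A = {d}) :
    (A ∪ B).erase d = A := by
  ext x
  have hx : x ∈ B \ A ↔ x = d := by rw [h, mem_singleton]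
  simp only [mem_erase, mem_union, mem_sdiff] at hx ⊢
  tauto

lemma exists_eq_erase_of_card_inter_eq_two {A B : Finset α} (hA : A.card = 3) (hB : B.card = 3)
    (hAB : (A ∩ B).card = 2) :
    ∃ c ∈ A ∪ B, ∃ d, c ≠ d ∧ A = (A ∪ B).erase d ∧ B = (A ∪ B).erase c := by
  obtain ⟨c, hc⟩ : ∃ c, A \ B = {c} :=
    card_eq_one.1 (by have := card_sdiff_add_card_inter A B; omega)
  obtain ⟨d, hd⟩ : ∃ d, B \ A = {d} :=
    card_eq_one.1 (by have := card_sdiff_add_card_inter B A; rw [inter_comm] at this; omega)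
  have hcA : c ∈ A \ B := hc ▸ mem_singleton_self c
  have hdB : d ∈ B \ A := hd ▸ mem_singleton_self d
  refine ⟨c, mem_union_left B (mem_sdiff.1 hcA).1, d,
    fun h => (mem_sdiff.1 hdB).2 (h ▸ (mem_sdiff.1 hcA).1),
    (erase_union_eq_of_sdiff_eq_singleton hd).symm, ?_⟩
  rw [union_comm, erase_union_eq_of_sdiff_eq_singleton hc]

lemma exists_twoSplit_separates {X Y : Finset α} {𝒮 : Finset (Finset (Finset α))}
    (hsplit : ∀ S ∈ 𝒮, IsSplit X S)
    (h : ∀ A B : Finset α, A ⊆ X → B ⊆ X → A.card = 3 → B.card = 3 → (A ∩ B).card = 2 →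
      ∃ S ∈ 𝒮, phiNe A B S)
    (hYX : Y ⊆ X) (hY : Y.card = 4) {y z : α} (hy : y ∈ Y) (hz : z ∈ Y) (hyz : y ≠ z) :
    ∃ T ∈ restrictSS 𝒮 Y, IsRSplit Y 2 T ∧ Separates T y z := by
  have hinter : Y.erase z ∩ Y.erase y = (Y.erase y).erase z := by
    rw [erase_inter, inter_erase, inter_self]
  refine (exists_phiNe_erase_iff hsplit hYX hY hy).1 (h _ _ ((erase_subset z Y).trans hYX)
    ((erase_subset y Y).trans hYX) (by rw [card_erase_of_mem hz, hY])
    (by rw [card_erase_of_mem hy, hY]) ?_)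
  rw [hinter, card_erase_of_mem (mem_erase.2 ⟨hyz.symm, hz⟩), card_erase_of_mem hy, hY]

theorem statement10_general (X : Finset α)
    (𝒮 : Finset (Finset (Finset α))) (h𝒮 : IsSplitSystem X 𝒮) :
    FourDices X 𝒮 ↔
      ∀ A B : Finset α, A ⊆ X → B ⊆ X → A.card = 3 → B.card = 3 → (A ∩ B).card = 2 →
        ∃ S ∈ 𝒮, phiNe A B S := by
  constructor
  · intro h4 A B hAX hBX hA hB hAB
    obtain ⟨c, hc, d, hcd, hAeq, hBeq⟩ := exists_eq_erase_of_card_inter_eq_two hA hB hAB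
    have hY : (A ∪ B).card = 4 := by have := card_union_add_card_inter A B; omega
    set Y := A ∪ B
    have hYX : Y ⊆ X := union_subset hAX hBX
    obtain hX | h4 := h4
    · have := card_le_card hYX
      omega
    obtain ⟨T, hT, T', hT', hne, h2, h2'⟩ := exists_subset_two_le_card_iff.1 (h4 Y hYX hY)
    rw [hAeq, hBeq, exists_phiNe_erase_iff h𝒮.1 hYX hY hc]
    rcases h2.separates_or_separates hY h2' hne hcd with hsep | hsep
    exacts [⟨T, hT, h2, hsep⟩, ⟨T', hT', h2', hsep⟩]
  · intro h
    exact Or.inr fun Y hYX hY => exists_subset_two_le_card_iff.2 <|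
      exists_ne_of_forall_separates (by omega) fun y hy z hz hyz =>
        exists_twoSplit_separates h𝒮.1 h hYX hY hy hz hyz

/-- For a split system `𝒮` on `X` (`|X| ≥ 4`): `𝒮` 4-dices `X` iff
for all 3-subsets `A, B` of `X` with `|A ∩ B| = 2` we have `φ_A ≠ φ_B`. -/
theorem statement10 (X : Finset α) (hX : 4 ≤ X.card)
    (𝒮 : Finset (Finset (Finset α))) (h𝒮 : IsSplitSystem X 𝒮) :
    FourDices X 𝒮 ↔
      ∀ A B : Finset α, A ⊆ X → B ⊆ X → A.card = 3 → B.card = 3 → (A ∩ B).card = 2 →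
        ∃ S ∈ 𝒮, phiNe A B S :=
  statement10_general X 𝒮 h𝒮

end InjectiveSplitSystems
end
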